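/- arXiv:2602.12710 — 3 statements merged into one kernel-verified Lean document; each statement's English description precedes it below -/
import Mathlib

section
/- Let C ∈ ℝ^{(MN)×(MN)} and let J be a natural number with rank(R(C)) ≤ J. Then there exist matrices A_1,…,A_J ∈ ℝ^{M×M} and B_1,…,B_J ∈ ℝ^{N×N} such that C = ∑_{j=1}^J B_j ⊗ A_j. In particular, the minimal number of Kronecker product terms needed to represent C equals the rank of R(C). -/
/-!
`R` is a bijection sending `B ⊗ A` to the rank-one matrix `vec A (vec B)ᵀ`, so a sum of `J`
Kronecker products is exactly a matrix whose rearrangement factors as `U V` with `U` having `J`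
columns; by rank factorization these are the `C` with `rank R(C) ≤ J`, and the minimum is the rank.
-/

open Matrix

/-- Kronecker product `B ⊗ A` with pair indexing `(n, m)`. -/
def kron {M N : ℕ} (B : Matrix (Fin N) (Fin N) ℝ) (A : Matrix (Fin M) (Fin M) ℝ) :
    Matrix (Fin N × Fin M) (Fin N × Fin M) ℝ :=
  Matrix.of fun p q => B p.1 q.1 * A p.2 q.2

/-- The rearrangement operator `R`. -/
def rearr {M N : ℕ} (C : Matrix (Fin N × Fin M) (Fin N × Fin M) ℝ) :
    Matrix (Fin M × Fin M) (Fin N × Fin N) ℝ :=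
  Matrix.of fun mm nn => C (nn.1, mm.1) (nn.2, mm.2)

namespace Matrix

variable {m n K : Type*} [Fintype n] [DecidableEq n] [Field K]

theorem exists_mul_eq_of_rank_le {X : Matrix m n K} {J : ℕ} (h : X.rank ≤ J) :
    ∃ (U : Matrix m (Fin J) K) (V : Matrix (Fin J) n K), X = U * V := by
  set W := LinearMap.range X.mulVecLin
  -- `K^J` maps onto the column space `W ≅ K^rank` by forgetting the last coordinates.
  let π : (Fin J → K) →ₗ[K] W := (Module.finBasis K W).equivFun.symm.toLinearMap ∘ₗ
    LinearMap.funLeft K K (Fin.castLE h)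
  have hπ : Function.Surjective π := (Module.finBasis K W).equivFun.symm.surjective.comp
    (LinearMap.funLeft_surjective_of_injective _ _ _ (Fin.castLE_injective h))
  obtain ⟨g, hg⟩ := Module.projective_lifting_property π X.mulVecLin.rangeRestrict hπ
  refine ⟨LinearMap.toMatrix' (W.subtype ∘ₗ π), LinearMap.toMatrix' g, ?_⟩
  rw [← LinearMap.toMatrix'_comp, LinearMap.comp_assoc, hg, LinearMap.rangeRestrict,
    LinearMap.subtype_comp_codRestrict, ← Matrix.toLin'_apply', LinearMap.toMatrix'_toLin']

theorem rank_le_iff_exists_mul_eq {X : Matrix m n K} {J : ℕ} :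
    X.rank ≤ J ↔ ∃ (U : Matrix m (Fin J) K) (V : Matrix (Fin J) n K), X = U * V :=
  ⟨exists_mul_eq_of_rank_le, fun ⟨U, V, hX⟩ =>
    hX ▸ (rank_mul_le_left U V).trans (U.rank_le_card_width.trans (Fintype.card_fin J).le)⟩

end Matrix

section Rearrangement

variable {M N J : ℕ}

theorem rearr_injective : Function.Injective (rearr (M := M) (N := N)) := by
  intro C D h
  ext ⟨n, m⟩ ⟨n', m'⟩
  exact congrFun (congrFun h (m, m')) (n, n')

theorem rearr_sum_kron (A : Fin J → Matrix (Fin M) (Fin M) ℝ)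
    (B : Fin J → Matrix (Fin N) (Fin N) ℝ) :
    rearr (∑ j, kron (B j) (A j)) =
      (Matrix.of fun mm j => A j mm.1 mm.2) * Matrix.of fun j nn => B j nn.1 nn.2 := by
  ext mm nn
  simp only [rearr, kron, of_apply, Matrix.sum_apply, mul_apply, mul_comm]

theorem exists_sum_kron_iff_exists_rearr_eq_mul (C : Matrix (Fin N × Fin M) (Fin N × Fin M) ℝ) :
    (∃ (A : Fin J → Matrix (Fin M) (Fin M) ℝ) (B : Fin J → Matrix (Fin N) (Fin N) ℝ),
        C = ∑ j, kron (B j) (A j)) ↔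
      ∃ (U : Matrix (Fin M × Fin M) (Fin J) ℝ) (V : Matrix (Fin J) (Fin N × Fin N) ℝ),
        rearr C = U * V := by
  constructor
  · rintro ⟨A, B, rfl⟩
    exact ⟨_, _, rearr_sum_kron A B⟩
  · rintro ⟨U, V, hC⟩
    refine ⟨fun j => Matrix.of fun m m' => U (m, m') j,
      fun j => Matrix.of fun n n' => V j (n, n'), rearr_injective ?_⟩
    rw [hC, rearr_sum_kron]
    rfl

theorem exists_sum_kron_iff_rank_rearr_le (C : Matrix (Fin N × Fin M) (Fin N × Fin M) ℝ) :
    (∃ (A : Fin J → Matrix (Fin M) (Fin M) ℝ) (B : Fin J → Matrix (Fin N) (Fin N) ℝ),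
        C = ∑ j, kron (B j) (A j)) ↔ (rearr C).rank ≤ J :=
  (exists_sum_kron_iff_exists_rearr_eq_mul C).trans rank_le_iff_exists_mul_eq.symm

end Rearrangement

/-- if `rank(R(C)) ≤ J` then `C` is a sum of `J` Kronecker product
terms; in particular the minimal number of Kronecker product terms needed to
represent `C` equals the rank of `R(C)`. -/
theorem stmt_4 {M N : ℕ} (C : Matrix (Fin N × Fin M) (Fin N × Fin M) ℝ) (J : ℕ) :
    ((rearr C).rank ≤ J →
      ∃ (A : Fin J → Matrix (Fin M) (Fin M) ℝ) (B : Fin J → Matrix (Fin N) (Fin N) ℝ),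
        C = ∑ j, kron (B j) (A j)) ∧
    (rearr C).rank =
      sInf {J' : ℕ | ∃ (A : Fin J' → Matrix (Fin M) (Fin M) ℝ)
          (B : Fin J' → Matrix (Fin N) (Fin N) ℝ), C = ∑ j, kron (B j) (A j)} := by
  have hS : {J' : ℕ | ∃ (A : Fin J' → Matrix (Fin M) (Fin M) ℝ)
      (B : Fin J' → Matrix (Fin N) (Fin N) ℝ), C = ∑ j, kron (B j) (A j)} =
      Set.Ici (rearr C).rank :=
    Set.ext fun _ => exists_sum_kron_iff_rank_rearr_le C
  exact ⟨(exists_sum_kron_iff_rank_rearr_le C).mpr, by rw [hS, csInf_Ici]⟩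
end

section
/- For natural numbers p, M, N, the difference between the number of identifying equations and the number of structural GVAR parameters satisfies the identity (p(MN)² + NM²) − (2pNM² + NM² + N(N−1)) = N·((N−2)pM² − N + 1); moreover, if N ≥ 3, p ≥ 1 and pM² ≥ N, this difference is strictly positive. -/
lemma gvar_equations_sub_parameters_eq (p M N : ℤ) :
    (p * (M * N) ^ 2 + N * M ^ 2) - (2 * p * N * M ^ 2 + N * M ^ 2 + N * (N - 1))
      = N * ((N - 2) * p * M ^ 2 - N + 1) := by
  ring

lemma sub_two_mul_sub_add_one_pos {N q : ℤ} (hN : 3 ≤ N) (hq : N ≤ q) :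
    0 < (N - 2) * q - N + 1 := by
  have hq_le : q ≤ (N - 2) * q := le_mul_of_one_le_left (by omega) (by omega)
  omega

/-- the difference between the number of identifying equations
`p(MN)² + NM²` and the number of structural GVAR parameters
`2pNM² + NM² + N(N−1)` equals `N·((N−2)pM² − N + 1)`; if `N ≥ 3`, `p ≥ 1` and
`pM² ≥ N`, this difference is strictly positive. -/
theorem stmt_16 (p M N : ℕ) :
    ((p * (M * N) ^ 2 + N * M ^ 2 : ℤ)
        - (2 * p * N * M ^ 2 + N * M ^ 2 + N * (N - 1))
      = N * ((N - 2) * p * M ^ 2 - N + 1)) ∧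
    (3 ≤ N → 1 ≤ p → (N : ℤ) ≤ p * M ^ 2 →
      0 < (p * (M * N) ^ 2 + N * M ^ 2 : ℤ)
        - (2 * p * N * M ^ 2 + N * M ^ 2 + N * (N - 1))) := by
  refine ⟨gvar_equations_sub_parameters_eq p M N, fun hN _ hq => ?_⟩
  have hN' : (3 : ℤ) ≤ N := by exact_mod_cast hN
  rw [gvar_equations_sub_parameters_eq, mul_assoc _ (p : ℤ)]
  exact mul_pos (by omega) (sub_two_mul_sub_add_one_pos hN' hq)
end

section
/- Let G ∈ ℝ^{(MN)×(MN)} be block lower triangular with all diagonal blocks equal to I_M, and let S ∈ ℝ^{(MN)×(MN)} be block diagonal with each diagonal block S_i ∈ ℝ^{M×M} lower triangular with strictly positive diagonal entries. Then L := G⁻¹·S is lower triangular with strictly positive diagonal entries, satisfies L·Lᵀ = G⁻¹·(S·Sᵀ)·G⁻ᵀ, and the diagonal blocks of L equal S_1,…,S_N; hence G and S are identified from the lower-triangular positive-diagonal factor of the reduced-form error covariance G⁻¹·(S·Sᵀ)·G⁻ᵀ. -/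
/-!
The block unitriangular matrix `G` is entrywise lower unitriangular for the lexicographic
order, so `det G = 1` and `G⁻¹` is again block lower triangular; comparing diagonal blocks in
`G⁻¹ * G = 1` shows that its diagonal blocks are identities. Since `S` is block diagonal, the
`(n,n')`-block of `G⁻¹ * S` is `(G⁻¹)ₙₙ' * Sₙ'`, which vanishes for `n < n'` and is `Sₙ` for
`n = n'`.
-/

open Matrix

/-- The `(n,n')`-block of `C`. -/
def blockOf {M N : ℕ} (C : Matrix (Fin N × Fin M) (Fin N × Fin M) ℝ) (n n' : Fin N) :
    Matrix (Fin M) (Fin M) ℝ :=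
  Matrix.of fun m m' => C (n, m) (n', m')

/-- Lexicographic order on the pair indices: `(n,m) < (n',m')` iff `n < n'` or
(`n = n'` and `m < m'`). -/
def lexLT {M N : ℕ} (r c : Fin N × Fin M) : Prop :=
  r.1 < c.1 ∨ (r.1 = c.1 ∧ r.2 < c.2)

variable {M N : ℕ}

lemma blockOf_mul (A B : Matrix (Fin N × Fin M) (Fin N × Fin M) ℝ) (n n' : Fin N) :
    blockOf (A * B) n n' = ∑ k : Fin N, blockOf A n k * blockOf B k n' := by
  ext m m'
  simp [blockOf, Matrix.mul_apply, Matrix.sum_apply, Fintype.sum_prod_type]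

lemma blockOf_one_self (n : Fin N) :
    blockOf (1 : Matrix (Fin N × Fin M) (Fin N × Fin M) ℝ) n n = 1 := by
  ext m m'
  simp [blockOf, Matrix.one_apply]

lemma blockOf_mul_of_blockDiagonal (A : Matrix (Fin N × Fin M) (Fin N × Fin M) ℝ)
    {S : Matrix (Fin N × Fin M) (Fin N × Fin M) ℝ} (hS : ∀ n n', n ≠ n' → blockOf S n n' = 0)
    (n n' : Fin N) : blockOf (A * S) n n' = blockOf A n n' * blockOf S n' n' := by
  rw [blockOf_mul, Finset.sum_eq_single n' (fun k _ hk => by rw [hS k n' hk, Matrix.mul_zero])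
    (by simp)]

lemma blockOf_mul_self_of_blockLower {A B : Matrix (Fin N × Fin M) (Fin N × Fin M) ℝ}
    (hA : ∀ n n', n < n' → blockOf A n n' = 0) (hB : ∀ n n', n < n' → blockOf B n n' = 0)
    (n : Fin N) : blockOf (A * B) n n = blockOf A n n * blockOf B n n := by
  rw [blockOf_mul, Finset.sum_eq_single n (fun k _ hk => ?_) (by simp)]
  rcases hk.lt_or_gt with hkn | hnk
  · rw [hB k n hkn, Matrix.mul_zero]
  · rw [hA n k hnk, Matrix.zero_mul]

lemma lexLT_iff_toLex_lt {r c : Fin N × Fin M} : lexLT r c ↔ toLex r < toLex c :=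
  Prod.Lex.lt_iff.symm

lemma eq_zero_of_lexLT {C : Matrix (Fin N × Fin M) (Fin N × Fin M) ℝ}
    (hlow : ∀ n n', n < n' → blockOf C n n' = 0)
    (hdiag : ∀ n m m', m < m' → blockOf C n n m m' = 0)
    {r c : Fin N × Fin M} (h : lexLT r c) : C r c = 0 := by
  obtain ⟨n, m⟩ := r
  obtain ⟨n', m'⟩ := c
  rcases h with hn | ⟨rfl, hm⟩
  · exact congrFun (congrFun (hlow n n' hn) m) m'
  · exact hdiag n m m' hm

lemma det_eq_one_of_blockLowerUnitriangular {C : Matrix (Fin N × Fin M) (Fin N × Fin M) ℝ}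
    (hlow : ∀ n n', n < n' → blockOf C n n' = 0) (hdiag : ∀ n, blockOf C n n = 1) :
    C.det = 1 := by
  have hdiag_lt n m m' (h : m < m') : blockOf C n n m m' = 0 := by
    rw [hdiag, Matrix.one_apply_ne h.ne]
  rw [← det_submatrix_equiv_self (ofLex : Fin N ×ₗ Fin M ≃ Fin N × Fin M),
    det_of_isLowerTriangular (C.submatrix ofLex ofLex) fun i j hij =>
      eq_zero_of_lexLT hlow hdiag_lt (lexLT_iff_toLex_lt.2 hij)]
  refine Finset.prod_eq_one fun i _ => ?_
  change blockOf C (ofLex i).1 (ofLex i).1 (ofLex i).2 (ofLex i).2 = 1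
  rw [hdiag, one_apply_eq]

lemma blockOf_inv_eq_zero_of_lt {C : Matrix (Fin N × Fin M) (Fin N × Fin M) ℝ} [Invertible C]
    (hlow : ∀ n n', n < n' → blockOf C n n' = 0) {n n' : Fin N} (h : n < n') :
    blockOf C⁻¹ n n' = 0 := by
  have hC : C.BlockTriangular (OrderDual.toDual ∘ Prod.fst) := fun r c hrc =>
    congrFun (congrFun (hlow r.1 c.1 hrc) r.2) c.2
  ext m m'
  exact blockTriangular_inv_of_blockTriangular hC (i := (n, m)) (j := (n', m')) h

lemma blockOf_inv_self {C : Matrix (Fin N × Fin M) (Fin N × Fin M) ℝ} [Invertible C]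
    (hlow : ∀ n n', n < n' → blockOf C n n' = 0) (hdiag : ∀ n, blockOf C n n = 1) (n : Fin N) :
    blockOf C⁻¹ n n = 1 := by
  have := blockOf_mul_self_of_blockLower (fun _ _ => blockOf_inv_eq_zero_of_lt hlow) hlow n
  rwa [inv_mul_of_invertible, blockOf_one_self, hdiag, Matrix.mul_one, eq_comm] at this

/-- if `G` is block lower triangular with identity diagonal
blocks and `S` is block diagonal with lower triangular positive-diagonal
blocks `S_i`, then `L = G⁻¹·S` is lower triangular with strictly positive
diagonal entries, satisfies `L·Lᵀ = G⁻¹·(S·Sᵀ)·G⁻ᵀ`, and the diagonal blocks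
of `L` are `S_1,…,S_N`; hence `G` and `S` are identified from the Cholesky
factor of the reduced-form error covariance. -/
theorem stmt_17 {M N : ℕ} (G S : Matrix (Fin N × Fin M) (Fin N × Fin M) ℝ)
    (Sblk : Fin N → Matrix (Fin M) (Fin M) ℝ)
    (hG : ∀ n n' : Fin N, n < n' → blockOf G n n' = 0)
    (hGdiag : ∀ n : Fin N, blockOf G n n = 1)
    (hS : ∀ n n' : Fin N, n ≠ n' → blockOf S n n' = 0)
    (hSdiag : ∀ n : Fin N, blockOf S n n = Sblk n)
    (hSlt : ∀ (n : Fin N) (m m' : Fin M), m < m' → Sblk n m m' = 0)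
    (hSpos : ∀ (n : Fin N) (m : Fin M), 0 < Sblk n m m) :
    (∀ r c : Fin N × Fin M, lexLT r c → (G⁻¹ * S) r c = 0) ∧
    (∀ r : Fin N × Fin M, 0 < (G⁻¹ * S) r r) ∧
    (G⁻¹ * S) * (G⁻¹ * S)ᵀ = G⁻¹ * (S * Sᵀ) * (Gᵀ)⁻¹ ∧
    (∀ n : Fin N, blockOf (G⁻¹ * S) n n = Sblk n) := by
  have : Invertible G :=
    invertibleOfIsUnitDet G ((det_eq_one_of_blockLowerUnitriangular hG hGdiag).symm ▸ isUnit_one)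
  have hL n n' : blockOf (G⁻¹ * S) n n' = blockOf G⁻¹ n n' * Sblk n' := by
    rw [blockOf_mul_of_blockDiagonal _ hS, hSdiag]
  have hLlow n n' (h : n < n') : blockOf (G⁻¹ * S) n n' = 0 := by
    rw [hL, blockOf_inv_eq_zero_of_lt hG h, Matrix.zero_mul]
  have hLdiag n : blockOf (G⁻¹ * S) n n = Sblk n := by
    rw [hL, blockOf_inv_self hG hGdiag, Matrix.one_mul]
  refine ⟨fun r c => eq_zero_of_lexLT hLlow fun n m m' h => ?_, fun r => ?_, ?_, hLdiag⟩
  · rw [hLdiag]; exact hSlt n m m' h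
  · change 0 < blockOf (G⁻¹ * S) r.1 r.1 r.2 r.2
    rw [hLdiag]; exact hSpos r.1 r.2
  · rw [transpose_mul, transpose_nonsing_inv]; simp only [Matrix.mul_assoc]
end
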